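/- Let B, C0 be symmetric positive definite d×d matrices and σ = 0. Then C(t) = (2B^{−1}t + C0^{−1})^{−1} solves C'(t) = −2 C(t) B^{−1} C(t) with C(0) = C0, and moreover ‖C(t)‖₂ ≤ max(‖C0‖₂, ‖B‖₂)/(2t+1) for all t ≥ 0. -/

import Mathlib

/-!
Along `t ≥ 0` the matrix `M t = 2t B⁻¹ + C0⁻¹` stays positive definite, so `C = M⁻¹` is
differentiable with `C' = -C M' C = -2 C B⁻¹ C` by the derivative of inversion in a normed algebra.

For the norm bound, Cauchy–Schwarz for the semi-inner product `⟪A ·, ·⟫` of a positive operator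
gives `‖A y‖² ≤ ‖A‖ ⟪A y, y⟫`, i.e. `‖x‖² ≤ ‖A‖ ⟪A⁻¹ x, x⟫`. Applied to `B` and `C0` this yields
`(2t + 1) ‖x‖² ≤ max ‖B‖ ‖C0‖ ⟪M t x, x⟫`, and such a coercivity bound for `M t` bounds
`‖(M t)⁻¹‖` by `max ‖B‖ ‖C0‖ / (2t + 1)`.
-/

open MeasureTheory Matrix

noncomputable def opNorm {d : ℕ} (M : Matrix (Fin d) (Fin d) ℝ) : ℝ :=
  ‖Matrix.toEuclideanCLM (𝕜 := ℝ) M‖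

open scoped InnerProductSpace ComplexOrder

namespace ContinuousLinearMap

variable {E : Type*} [NormedAddCommGroup E] [InnerProductSpace ℝ E] {T S : E →L[ℝ] E}

theorem IsPositive.inner_apply_sq_le (hT : T.IsPositive) (x y : E) :
    ⟪T x, y⟫_ℝ ^ 2 ≤ ⟪T x, x⟫_ℝ * ⟪T y, y⟫_ℝ := by
  have hyx : ⟪T y, x⟫_ℝ = ⟪T x, y⟫_ℝ := by
    rw [hT.inner_left_eq_inner_right, real_inner_comm]
  have hquad : ∀ s : ℝ, 0 ≤ ⟪T y, y⟫_ℝ * (s * s) + 2 * ⟪T x, y⟫_ℝ * s + ⟪T x, x⟫_ℝ := by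
    intro s
    have h := hT.inner_nonneg_left (x + s • y)
    simp only [map_add, map_smul, inner_add_left, inner_add_right, real_inner_smul_left,
      real_inner_smul_right, hyx] at h
    linarith
  have := discrim_le_zero hquad
  rw [discrim] at this
  linarith

theorem IsPositive.norm_apply_sq_le (hT : T.IsPositive) (x : E) :
    ‖T x‖ ^ 2 ≤ ‖T‖ * ⟪T x, x⟫_ℝ := by
  rcases (norm_nonneg (T x)).eq_or_lt with h0 | hpos
  · rw [← h0]
    simpa using mul_nonneg (norm_nonneg T) (hT.inner_nonneg_left x)
  have hTTx : ⟪T (T x), T x⟫_ℝ ≤ ‖T‖ * ‖T x‖ ^ 2 :=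
    calc ⟪T (T x), T x⟫_ℝ ≤ ‖T (T x)‖ * ‖T x‖ := real_inner_le_norm _ _
      _ ≤ ‖T‖ * ‖T x‖ * ‖T x‖ := by gcongr; exact T.le_opNorm _
      _ = ‖T‖ * ‖T x‖ ^ 2 := by ring
  have h := hT.inner_apply_sq_le x (T x)
  rw [real_inner_self_eq_norm_sq] at h
  have : ‖T x‖ ^ 2 * ‖T x‖ ^ 2 ≤ ‖T‖ * ⟪T x, x⟫_ℝ * ‖T x‖ ^ 2 := by
    nlinarith [hT.inner_nonneg_left x]
  exact le_of_mul_le_mul_right this (by positivity)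

theorem IsPositive.sq_norm_le_mul_inner_of_mul_eq_one (hT : T.IsPositive) (hTS : T * S = 1)
    {r : ℝ} (hr : ‖T‖ ≤ r) (x : E) : ‖x‖ ^ 2 ≤ r * ⟪S x, x⟫_ℝ := by
  have hx : T (S x) = x := congr($hTS x)
  have h := hT.norm_apply_sq_le (S x)
  have hnonneg := hT.inner_nonneg_left (S x)
  rw [hx, real_inner_comm] at h hnonneg
  calc ‖x‖ ^ 2 ≤ ‖T‖ * ⟪S x, x⟫_ℝ := h
    _ ≤ r * ⟪S x, x⟫_ℝ := by gcongr

theorem opNorm_le_of_sq_norm_le_mul_inner (hTS : T * S = 1) {c : ℝ} (hc : 0 ≤ c)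
    (h : ∀ x, ‖x‖ ^ 2 ≤ c * ⟪T x, x⟫_ℝ) : ‖S‖ ≤ c := by
  refine S.opNorm_le_bound hc fun x => ?_
  rcases (norm_nonneg (S x)).eq_or_lt with h0 | hpos
  · rw [← h0]; positivity
  have hx : T (S x) = x := congr($hTS x)
  have : ‖S x‖ * ‖S x‖ ≤ c * ‖x‖ * ‖S x‖ :=
    calc ‖S x‖ * ‖S x‖ = ‖S x‖ ^ 2 := by ring
      _ ≤ c * ⟪x, S x⟫_ℝ := by simpa [hx] using h (S x)
      _ ≤ c * (‖x‖ * ‖S x‖) := by gcongr; exact real_inner_le_norm _ _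
      _ = c * ‖x‖ * ‖S x‖ := by ring
  exact le_of_mul_le_mul_right this hpos

end ContinuousLinearMap

theorem HasDerivAt.ringInverse {𝕜 R : Type*} [NontriviallyNormedField 𝕜] [NormedRing R]
    [NormedAlgebra 𝕜 R] [HasSummableGeomSeries R] {f : 𝕜 → R} {f' : R} {t : 𝕜}
    (hf : HasDerivAt f f' t) (ht : IsUnit (f t)) :
    HasDerivAt (fun s => Ring.inverse (f s))
      (-(Ring.inverse (f t) * f' * Ring.inverse (f t))) t := by
  obtain ⟨u, hu⟩ := ht
  have h := hasFDerivAt_ringInverse (𝕜 := 𝕜) u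
  rw [hu] at h
  exact (h.comp_hasDerivAt t hf).congr_deriv (by simp [← hu])

namespace Matrix

variable {n : Type*} [Fintype n] [DecidableEq n]

theorem PosSemidef.isPositive_toEuclideanCLM {𝕜 : Type*} [RCLike 𝕜] {A : Matrix n n 𝕜}
    (hA : A.PosSemidef) : (toEuclideanCLM (𝕜 := 𝕜) A).IsPositive := by
  rw [← ContinuousLinearMap.isPositive_toLinearMap_iff, coe_toEuclideanCLM_eq_toEuclideanLin]
  exact isPositive_toEuclideanLin_iff.mpr hA

theorem toEuclideanCLM_mul_toEuclideanCLM_inv {𝕜 : Type*} [RCLike 𝕜] {A : Matrix n n 𝕜}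
    (hA : IsUnit A.det) : toEuclideanCLM (𝕜 := 𝕜) A * toEuclideanCLM (𝕜 := 𝕜) A⁻¹ = 1 := by
  rw [← map_mul, mul_nonsing_inv _ hA, map_one]

open scoped Matrix.Norms.L2Operator in
theorem hasDerivAt_inv_smul_add_apply {𝕜 : Type*} [RCLike 𝕜] (A C : Matrix n n 𝕜) {t : 𝕜}
    (ht : IsUnit (t • A + C).det) (i j : n) :
    HasDerivAt (fun s => (s • A + C)⁻¹ i j) (-((t • A + C)⁻¹ * A * (t • A + C)⁻¹) i j) t := by
  have hline : HasDerivAt (fun s => s • A + C) A t := by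
    simpa using ((hasDerivAt_id t).smul_const A).add_const C
  have hinv := hline.ringInverse ((isUnit_iff_isUnit_det _).mpr ht)
  simp only [← nonsing_inv_eq_ringInverse] at hinv
  exact (entryLinearMap 𝕜 𝕜 i j).toContinuousLinearMap.hasFDerivAt.comp_hasDerivAt t hinv

theorem PosDef.smul_inv_add_inv {B C : Matrix n n ℝ} (hB : B.PosDef) (hC : C.PosDef) {s : ℝ}
    (hs : 0 ≤ s) : (s • B⁻¹ + C⁻¹).PosDef :=
  .posSemidef_add (hB.inv.posSemidef.smul hs) hC.inv

theorem opNorm_inv_smul_inv_add_inv_le {B C : Matrix n n ℝ} (hB : B.PosDef) (hC : C.PosDef)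
    {s : ℝ} (hs : 0 ≤ s) :
    ‖toEuclideanCLM (𝕜 := ℝ) (s • B⁻¹ + C⁻¹)⁻¹‖
      ≤ max ‖toEuclideanCLM (𝕜 := ℝ) C‖ ‖toEuclideanCLM (𝕜 := ℝ) B‖ / (s + 1) := by
  set m := max ‖toEuclideanCLM (𝕜 := ℝ) C‖ ‖toEuclideanCLM (𝕜 := ℝ) B‖
  have hM := hB.smul_inv_add_inv hC hs
  refine ContinuousLinearMap.opNorm_le_of_sq_norm_le_mul_inner
    (toEuclideanCLM_mul_toEuclideanCLM_inv hM.det_pos.ne'.isUnit) (by positivity) fun x => ?_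
  have hBx := hB.posSemidef.isPositive_toEuclideanCLM.sq_norm_le_mul_inner_of_mul_eq_one
    (toEuclideanCLM_mul_toEuclideanCLM_inv hB.det_pos.ne'.isUnit) (le_max_right _ _ : _ ≤ m) x
  have hCx := hC.posSemidef.isPositive_toEuclideanCLM.sq_norm_le_mul_inner_of_mul_eq_one
    (toEuclideanCLM_mul_toEuclideanCLM_inv hC.det_pos.ne'.isUnit) (le_max_left _ _ : _ ≤ m) x
  have hMx : ⟪toEuclideanCLM (𝕜 := ℝ) (s • B⁻¹ + C⁻¹) x, x⟫_ℝ
      = s * ⟪toEuclideanCLM (𝕜 := ℝ) B⁻¹ x, x⟫_ℝ + ⟪toEuclideanCLM (𝕜 := ℝ) C⁻¹ x, x⟫_ℝ := by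
    simp [inner_add_left, real_inner_smul_left]
  rw [hMx, div_mul_eq_mul_div, le_div_iff₀ (by linarith)]
  nlinarith [mul_le_mul_of_nonneg_left hBx hs]

end Matrix

theorem stmt13 {d : ℕ} (B C0 : Matrix (Fin d) (Fin d) ℝ)
    (hB : B.PosDef) (hC0 : C0.PosDef)
    (C : ℝ → Matrix (Fin d) (Fin d) ℝ)
    (hC : C = fun t => ((2 * t) • B⁻¹ + C0⁻¹)⁻¹) :
    C 0 = C0 ∧
    (∀ t, 0 ≤ t → ∀ i j, HasDerivAt (fun s => C s i j)
      (((-2 : ℝ) • (C t * B⁻¹ * C t)) i j) t) ∧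
    ∀ t, 0 ≤ t → opNorm (C t) ≤ max (opNorm C0) (opNorm B) / (2 * t + 1) := by
  subst hC
  refine ⟨?initial, fun t ht i j => ?ode, fun t ht => ?bound⟩
  case initial => simp [nonsing_inv_nonsing_inv _ hC0.det_pos.ne'.isUnit]
  case bound => exact opNorm_inv_smul_inv_add_inv_le hB hC0 (by positivity)
  case ode =>
    have hM := (hB.smul_inv_add_inv hC0 (mul_nonneg zero_le_two ht)).det_pos.ne'.isUnit
    have h := (hasDerivAt_inv_smul_add_apply B⁻¹ C0⁻¹ hM i j).comp t
      ((hasDerivAt_id t).const_mul 2)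
    exact h.congr_deriv (by simp only [Matrix.smul_apply, smul_eq_mul]; ring)
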